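/- arXiv:2404.05096 — 4 statements merged into one kernel-verified Lean document; each statement's English description precedes it below -/
import Mathlib

section
/- Let n, c, d be integers with d ≠ 0 and d dividing f_n(c), where f_n(x) = x^3 - n x^2 + (n-1) x - 1. Then there exist unique integers a, b such that the matrix X with rows (0,a,b), (0,c,d), (1,0,n-c) satisfies det X = 1 and det(X - I) = 1. -/
/-- If `d ≠ 0` divides `f_n(c) = c^3 - n c^2 + (n-1) c - 1`, then there exist unique integers
`a`, `b` such that the matrix `[[0,a,b],[0,c,d],[1,0,n-c]]` has determinant `1` and
`det (X - 1) = 1`. -/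
theorem exists_unique_standard_cs (n c d : ℤ) (hd : d ≠ 0)
    (hdvd : d ∣ c ^ 3 - n * c ^ 2 + (n - 1) * c - 1) :
    ∃! ab : ℤ × ℤ,
      (Matrix.det !![0, ab.1, ab.2; 0, c, d; 1, 0, n - c] = 1) ∧
      (Matrix.det (!![0, ab.1, ab.2; 0, c, d; 1, 0, n - c] - 1) = 1) := by
  obtain ⟨k, hk⟩ := hdvd
  refine ⟨(-k, (c - 1) * (n - c - 1)), ⟨?_, ?_⟩, ?_⟩
  · simp [Matrix.det_fin_three]
    linear_combination hk
  · simp [Matrix.det_fin_three, Matrix.sub_apply, Matrix.one_apply]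
    linear_combination hk
  · rintro ⟨a, b⟩ ⟨h1, h2⟩
    simp [Matrix.det_fin_three, Matrix.sub_apply, Matrix.one_apply] at h1 h2
    have hb : b = (c - 1) * (n - c - 1) := by linear_combination h2 - h1
    have ha : a * d = -k * d := by
      rw [hb] at h1
      linear_combination h1 - hk
    have : a = -k := mul_right_cancel₀ hd ha
    simp [this, hb]
end

section
/- For integers c, d with d ≠ 0, and integer n, the following are equivalent: (1) d divides f_n(c); (2) there exist integers a and b such that the matrix [[0,a,b],[0,c,d],[1,0,n-c]] has determinant 1 and determinant of (matrix minus identity) equal to 1. -/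
/-- For integers `c`, `d ≠ 0`, `n`: `d ∣ f_n(c)` iff there exist integers `a`, `b` such that
`[[0,a,b],[0,c,d],[1,0,n-c]]` has determinant `1` and `det (X - 1) = 1`. -/
theorem dvd_iff_standard_cs (n c d : ℤ) (hd : d ≠ 0) :
    d ∣ c ^ 3 - n * c ^ 2 + (n - 1) * c - 1 ↔
      ∃ a b : ℤ,
        (Matrix.det !![0, a, b; 0, c, d; 1, 0, n - c] = 1) ∧
        (Matrix.det (!![0, a, b; 0, c, d; 1, 0, n - c] - 1) = 1) := by
  constructor
  · rintro ⟨k, hk⟩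
    refine ⟨-k, (c - 1) * (n - c - 1), ?_, ?_⟩ <;>
      simp [Matrix.det_fin_three, Matrix.sub_apply, Matrix.one_apply] <;> nlinarith [hk]
  · rintro ⟨a, b, h1, h2⟩
    simp [Matrix.det_fin_three, Matrix.sub_apply, Matrix.one_apply] at h1 h2
    have hb : b = (c - 1) * (n - c - 1) := by nlinarith [h1, h2]
    exact ⟨-a, by linear_combination h1 + c * hb⟩
end

section
/- If X_{c,d,n} = [[0,a,b],[0,c,d],[1,0,n-c]] is a 3×3 integer matrix with det X = 1 and det(X - I) = 1, then d ≠ 0. -/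
/-- If `X = [[0,a,b],[0,c,d],[1,0,n-c]]` is an integer matrix with `det X = 1` and
`det (X - 1) = 1`, then `d ≠ 0`. -/
theorem standard_cs_d_ne_zero (n a b c d : ℤ)
    (h1 : Matrix.det !![0, a, b; 0, c, d; 1, 0, n - c] = 1)
    (h2 : Matrix.det (!![0, a, b; 0, c, d; 1, 0, n - c] - 1) = 1) :
    d ≠ 0 := by
  intro hd
  subst hd
  rw [Matrix.one_fin_three] at h2
  simp [Matrix.det_fin_three, Matrix.sub_apply] at h1 h2
  rcases Int.eq_one_or_neg_one_of_mul_eq_one' (show b * (-c) = 1 by linarith) with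
    ⟨hb, hc⟩ | ⟨hb, hc⟩ <;>
  · have hc' : c = -(-c) := by ring
    rw [hc'] at h2; rw [hb, hc] at h2; push_cast at h2; omega
end

section
/- Define p_n(c) = c^2 + (1-n)c + 1. If integers c, d, n satisfy d ≠ 0 and d divides f_n(c), then d divides f_{5-n}(p_n(c)). -/
/-- Trace symmetry: if `d ≠ 0` divides `f_n(c)`, then `d` divides `f_{5-n}(p_n(c))`
where `p_n(c) = c^2 + (1-n) c + 1`. -/
theorem dvd_fn_symmetry (n c d : ℤ) (hd : d ≠ 0)
    (h : d ∣ c ^ 3 - n * c ^ 2 + (n - 1) * c - 1) :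
    d ∣ (c ^ 2 + (1 - n) * c + 1) ^ 3 - (5 - n) * (c ^ 2 + (1 - n) * c + 1) ^ 2 +
        ((5 - n) - 1) * (c ^ 2 + (1 - n) * c + 1) - 1 := by
  obtain ⟨k, hk⟩ := h
  exact ⟨k * (c ^ 3 + (3 - 2 * n) * c ^ 2 + (n ^ 2 - 3 * n + 2) * c + 1), by
    linear_combination (c ^ 3 + (3 - 2 * n) * c ^ 2 + (n ^ 2 - 3 * n + 2) * c + 1) * hk⟩
end
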